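/- There is a well-defined group homomorphism π : L(4,4,2) → L(2,2,2,2) with π(z1) = x1, π(z2) = x2, π(z3) = x3 + x4, and its kernel is the cyclic group of order 2 generated by 2z1 + 2z2 - c. -/

import Mathlib

/-- Relations subgroup for the string group of weight type `p`:
generated by the elements `p i • x i - p 0 • x 0`. -/
noncomputable def stringRels (t : ℕ) (p : Fin (t + 1) → ℕ) :
    AddSubgroup (Fin (t + 1) →₀ ℤ) :=
  AddSubgroup.closure (Set.range fun i : Fin (t + 1) =>
    Finsupp.single i (p i : ℤ) - Finsupp.single 0 (p 0 : ℤ))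

/-- The string group `L(p)`. -/
abbrev StringGroup (t : ℕ) (p : Fin (t + 1) → ℕ) :=
  (Fin (t + 1) →₀ ℤ) ⧸ stringRels t p

/-- The generator `x_i` of the string group. -/
noncomputable def gen (t : ℕ) (p : Fin (t + 1) → ℕ) (i : Fin (t + 1)) :
    StringGroup t p :=
  QuotientAddGroup.mk (Finsupp.single i 1)

/-- The canonical element `c = p_i • x_i` of the string group. -/
noncomputable def can (t : ℕ) (p : Fin (t + 1) → ℕ) : StringGroup t p :=
  (p 0 : ℤ) • gen t p 0

/-!
`π` exists because it sends the relations of `L(4,4,2)` to consequences of `2xᵢ = 2xⱼ`.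
An element `a z₁ + b z₂ + c z₃` is killed by `π` exactly when `a + b + 2c = 0` and `b`, `c` are
even: this is read off through the degree `L(2,2,2,2) → ℤ`, `xᵢ ↦ 1`, and the coordinate
parities `L(2,2,2,2) → ZMod 2`. Using `2z₃ = 4z₁` such an element is a multiple of
`k = 2z₂ - 2z₁`, and `k ≠ 0` because the character `L(4,4,2) → ZMod 4` with `z₂ ↦ 1`,
`z₁, z₃ ↦ 0` sends it to `2`. In Lean the generators are indexed from `0`: `zᵢ` is
`gen 2 ![4, 4, 2] (i - 1)`.
-/

namespace StringGroup

variable {t : ℕ} {p : Fin (t + 1) → ℕ}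

theorem mk_single (i : Fin (t + 1)) (n : ℤ) :
    (Finsupp.single i n : StringGroup t p) = n • gen t p i := by
  rw [gen, ← QuotientAddGroup.mk_zsmul, Finsupp.smul_single, smul_eq_mul, mul_one]

theorem exists_eq_sum_zsmul_gen (x : StringGroup t p) :
    ∃ c : Fin (t + 1) → ℤ, x = ∑ i, c i • gen t p i := by
  obtain ⟨v, rfl⟩ := QuotientAddGroup.mk_surjective x
  refine ⟨v, ?_⟩
  conv_lhs => rw [← Finsupp.univ_sum_single v]
  simp only [QuotientAddGroup.mk_sum, mk_single]

theorem natCast_zsmul_gen (i : Fin (t + 1)) : (p i : ℤ) • gen t p i = can t p := by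
  rw [can, ← mk_single, ← mk_single, ← sub_eq_zero, ← QuotientAddGroup.mk_sub,
    QuotientAddGroup.eq_zero_iff]
  exact AddSubgroup.subset_closure ⟨i, rfl⟩

section lift

variable {A : Type*} [AddCommGroup A] (a : Fin (t + 1) → A)

noncomputable def lift (ha : ∀ i, (p i : ℤ) • a i = (p 0 : ℤ) • a 0) : StringGroup t p →+ A :=
  QuotientAddGroup.lift _ (Finsupp.liftAddHom fun i => zmultiplesHom A (a i)) <| by
    rw [stringRels, AddSubgroup.closure_le]
    rintro _ ⟨i, rfl⟩
    simp only [SetLike.mem_coe, AddMonoidHom.mem_ker, map_sub, Finsupp.liftAddHom_apply_single,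
      zmultiplesHom_apply, ha i, sub_self]

@[simp]
theorem lift_gen (ha : ∀ i, (p i : ℤ) • a i = (p 0 : ℤ) • a 0) (i : Fin (t + 1)) :
    lift a ha (gen t p i) = a i := by
  simp [lift, gen]

end lift

end StringGroup

open StringGroup

namespace L2222

theorem two_zsmul_gen (i : Fin 4) : (2 : ℤ) • gen 3 ![2, 2, 2, 2] i = can 3 ![2, 2, 2, 2] := by
  fin_cases i <;> exact natCast_zsmul_gen _

noncomputable def degree : StringGroup 3 ![2, 2, 2, 2] →+ ℤ :=
  lift (fun _ => 1) fun i => by fin_cases i <;> rfl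

noncomputable def parity (j : Fin 4) : StringGroup 3 ![2, 2, 2, 2] →+ ZMod 2 :=
  lift (Pi.single j 1) fun i => by fin_cases i <;> fin_cases j <;> decide

end L2222

namespace L442

theorem can_eq : can 2 ![4, 4, 2] = (4 : ℤ) • gen 2 ![4, 4, 2] 0 := rfl

theorem four_zsmul_gen_one : (4 : ℤ) • gen 2 ![4, 4, 2] 1 = (4 : ℤ) • gen 2 ![4, 4, 2] 0 :=
  natCast_zsmul_gen 1

theorem two_zsmul_gen_two : (2 : ℤ) • gen 2 ![4, 4, 2] 2 = (4 : ℤ) • gen 2 ![4, 4, 2] 0 :=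
  natCast_zsmul_gen 2

noncomputable def kerGen : StringGroup 2 ![4, 4, 2] :=
  (2 : ℤ) • gen 2 ![4, 4, 2] 0 + (2 : ℤ) • gen 2 ![4, 4, 2] 1 - can 2 ![4, 4, 2]

noncomputable def projection : StringGroup 2 ![4, 4, 2] →+ StringGroup 3 ![2, 2, 2, 2] :=
  lift ![gen 3 _ 0, gen 3 _ 1, gen 3 _ 2 + gen 3 _ 3] <| by
    have h := L2222.two_zsmul_gen
    intro i
    fin_cases i
    · rfl
    · simp only [Fin.mk_one, Matrix.cons_val_one, Matrix.cons_val_zero, Nat.cast_ofNat]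
      linear_combination (norm := module) (2 : ℤ) • h 1 - (2 : ℤ) • h 0
    · simp only [Fin.reduceFinMk, Matrix.cons_val, Matrix.cons_val_zero, Nat.cast_ofNat]
      linear_combination (norm := module) h 2 + h 3 - (2 : ℤ) • h 0

theorem projection_gen (i : Fin 3) :
    projection (gen 2 _ i) = ![gen 3 _ 0, gen 3 _ 1, gen 3 _ 2 + gen 3 _ 3] i :=
  lift_gen _ _ i

theorem projection_eq_zero_iff (a b c : ℤ) :
    projection (a • gen 2 _ 0 + b • gen 2 _ 1 + c • gen 2 _ 2) = 0 ↔
      a + b + 2 * c = 0 ∧ Even b ∧ Even c := by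
  simp only [map_add, map_zsmul, projection_gen, Fin.isValue, Matrix.cons_val_zero,
    Matrix.cons_val_one, Matrix.cons_val]
  constructor
  · intro h
    have hdeg := congrArg L2222.degree h
    have hb := congrArg (L2222.parity 1) h
    have hc := congrArg (L2222.parity 2) h
    simp [L2222.degree, L2222.parity] at hdeg hb hc
    exact ⟨by linarith, ZMod.intCast_eq_zero_iff_even.mp hb, ZMod.intCast_eq_zero_iff_even.mp hc⟩
  · rintro ⟨habc, ⟨m, rfl⟩, ⟨n, rfl⟩⟩
    obtain rfl : a = -2 * m - 4 * n := by linarith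
    have h := L2222.two_zsmul_gen
    linear_combination (norm := module) m • h 1 - m • h 0 + n • h 2 + n • h 3 - (2 * n) • h 0

theorem projection_kerGen : projection kerGen = 0 := by
  have h : kerGen = (-2 : ℤ) • gen 2 _ 0 + (2 : ℤ) • gen 2 _ 1 + (0 : ℤ) • gen 2 _ 2 := by
    rw [kerGen, can_eq]
    module
  rw [h, projection_eq_zero_iff]
  decide

theorem ker_projection : projection.ker = AddSubgroup.zmultiples kerGen := by
  ext x
  rw [AddMonoidHom.mem_ker, AddSubgroup.mem_zmultiples_iff]
  constructor
  · obtain ⟨c, rfl⟩ := exists_eq_sum_zsmul_gen x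
    rw [Fin.sum_univ_three, projection_eq_zero_iff]
    rintro ⟨habc, ⟨m, hm⟩, ⟨n, hn⟩⟩
    refine ⟨m, ?_⟩
    have hc0 : c 0 = -2 * m - 4 * n := by linarith
    rw [kerGen, hc0, hm, hn, can_eq]
    linear_combination (norm := module) (-n) • two_zsmul_gen_two
  · rintro ⟨m, rfl⟩
    rw [map_zsmul, projection_kerGen, smul_zero]

theorem addOrderOf_kerGen : addOrderOf kerGen = 2 := by
  refine addOrderOf_eq_prime ?_ ?_
  · rw [kerGen, can_eq]
    linear_combination (norm := module) four_zsmul_gen_one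
  · let detector : StringGroup 2 ![4, 4, 2] →+ ZMod 4 :=
      lift ![0, 1, 0] fun i => by fin_cases i <;> decide
    intro h
    have h2 := congrArg detector h
    simp [kerGen, detector, can] at h2
    exact absurd h2 (by decide)

end L442

theorem stmt_14 :
    ∃ π : StringGroup 2 ![4, 4, 2] →+ StringGroup 3 ![2, 2, 2, 2],
      π (gen 2 ![4, 4, 2] 0) = gen 3 ![2, 2, 2, 2] 0 ∧
      π (gen 2 ![4, 4, 2] 1) = gen 3 ![2, 2, 2, 2] 1 ∧
      π (gen 2 ![4, 4, 2] 2) = gen 3 ![2, 2, 2, 2] 2 + gen 3 ![2, 2, 2, 2] 3 ∧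
      π.ker = AddSubgroup.zmultiples
        ((2 : ℤ) • gen 2 ![4, 4, 2] 0 + (2 : ℤ) • gen 2 ![4, 4, 2] 1 - can 2 ![4, 4, 2]) ∧
      addOrderOf
        ((2 : ℤ) • gen 2 ![4, 4, 2] 0 + (2 : ℤ) • gen 2 ![4, 4, 2] 1 - can 2 ![4, 4, 2]) = 2 :=
  ⟨L442.projection, L442.projection_gen 0, L442.projection_gen 1, L442.projection_gen 2,
    L442.ker_projection, L442.addOrderOf_kerGen⟩
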